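/- arXiv:2010.10443 — 2 statements merged into one kernel-verified Lean document; each statement's English description precedes it below -/
import Mathlib

section
/- Let γ, η, β, ζ, ξ, K, ν > 0 with γ > (ηβ)^{1/2} and R₀ := (K/ν)(γ − (ηβ)^{1/2})(ξ + ζ + ζ(β/η)^{1/2}) > 1. Define G(I) = K(γ − η·ζI/(η+ζI) − β^{1/2}(η+ζI)^{1/2}) − F(I) − (1+ξK)I, where F(I) = ν(ξ + ζ(ζI/(η+ζI) − 1)² + ζ(β/(η+ζI))^{1/2})^{−1}. Then there exists a unique Ī > 0 with G(Ī) = 0. -/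
theorem stmt_9 (γ η β ζ ξ K ν : ℝ) (hγ : 0 < γ) (hη : 0 < η) (hβ : 0 < β)
    (hζ : 0 < ζ) (hξ : 0 < ξ) (hK : 0 < K) (hν : 0 < ν)
    (hcond : Real.sqrt (η * β) < γ)
    (hR0 : 1 < (K / ν) * (γ - Real.sqrt (η * β)) * (ξ + ζ + ζ * Real.sqrt (β / η)))
    (F G : ℝ → ℝ)
    (hF : F = fun I =>
      ν * (ξ + ζ * (ζ * I / (η + ζ * I) - 1) ^ 2 + ζ * Real.sqrt (β / (η + ζ * I)))⁻¹)
    (hG : G = fun I =>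
      K * (γ - η * (ζ * I / (η + ζ * I)) - Real.sqrt β * Real.sqrt (η + ζ * I))
        - F I - (1 + ξ * K) * I) :
    ∃! I : ℝ, 0 < I ∧ G I = 0 := by
  subst hF
  subst hG
  -- basic positivity
  have hp : ∀ I : ℝ, 0 ≤ I → 0 < η + ζ * I := fun I hI => by positivity
  have hFpos : ∀ I : ℝ, 0 ≤ I →
      0 < ξ + ζ * (ζ * I / (η + ζ * I) - 1) ^ 2 + ζ * Real.sqrt (β / (η + ζ * I)) := by
    intro I hI; positivity
  -- monotonicity of φ(I) = ζI/(η+ζI)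
  have hφmono : ∀ a b : ℝ, 0 ≤ a → a ≤ b →
      ζ * a / (η + ζ * a) ≤ ζ * b / (η + ζ * b) := by
    intro a b ha hab
    rw [div_le_div_iff₀ (hp a ha) (hp b (ha.trans hab))]
    have := mul_le_mul_of_nonneg_left hab (mul_nonneg hζ.le hη.le)
    nlinarith
  have hφlt1 : ∀ I : ℝ, 0 ≤ I → ζ * I / (η + ζ * I) ≤ 1 := by
    intro I hI
    rw [div_le_one (hp I hI)]
    nlinarith
  have hφnn : ∀ I : ℝ, 0 ≤ I → 0 ≤ ζ * I / (η + ζ * I) := by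
    intro I hI
    exact div_nonneg (by positivity) (hp I hI).le
  -- F is monotone (nondecreasing) on [0, ∞)
  have hFmono : ∀ a b : ℝ, 0 ≤ a → a ≤ b →
      ν * (ξ + ζ * (ζ * a / (η + ζ * a) - 1) ^ 2 + ζ * Real.sqrt (β / (η + ζ * a)))⁻¹ ≤
      ν * (ξ + ζ * (ζ * b / (η + ζ * b) - 1) ^ 2 + ζ * Real.sqrt (β / (η + ζ * b)))⁻¹ := by
    intro a b ha hab
    have hb : 0 ≤ b := ha.trans hab
    have hsq : (ζ * b / (η + ζ * b) - 1) ^ 2 ≤ (ζ * a / (η + ζ * a) - 1) ^ 2 := by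
      have h1 : (ζ * b / (η + ζ * b) - 1) ^ 2 = (1 - ζ * b / (η + ζ * b)) ^ 2 := by ring
      have h2 : (ζ * a / (η + ζ * a) - 1) ^ 2 = (1 - ζ * a / (η + ζ * a)) ^ 2 := by ring
      rw [h1, h2]
      have h3 : 0 ≤ 1 - ζ * b / (η + ζ * b) := by linarith [hφlt1 b hb]
      have h4 : 1 - ζ * b / (η + ζ * b) ≤ 1 - ζ * a / (η + ζ * a) := by
        linarith [hφmono a b ha hab]
      exact pow_le_pow_left₀ h3 h4 2
    have hsqrt : Real.sqrt (β / (η + ζ * b)) ≤ Real.sqrt (β / (η + ζ * a)) := by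
      apply Real.sqrt_le_sqrt
      apply div_le_div_of_nonneg_left hβ.le (hp a ha)
      nlinarith
    have hDle : ξ + ζ * (ζ * b / (η + ζ * b) - 1) ^ 2 + ζ * Real.sqrt (β / (η + ζ * b)) ≤
        ξ + ζ * (ζ * a / (η + ζ * a) - 1) ^ 2 + ζ * Real.sqrt (β / (η + ζ * a)) := by
      have := mul_le_mul_of_nonneg_left hsq hζ.le
      have := mul_le_mul_of_nonneg_left hsqrt hζ.le
      linarith
    have hinv : (ξ + ζ * (ζ * a / (η + ζ * a) - 1) ^ 2 + ζ * Real.sqrt (β / (η + ζ * a)))⁻¹ ≤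
        (ξ + ζ * (ζ * b / (η + ζ * b) - 1) ^ 2 + ζ * Real.sqrt (β / (η + ζ * b)))⁻¹ :=
      inv_anti₀ (hFpos b hb) hDle
    exact mul_le_mul_of_nonneg_left hinv hν.le
  -- G is strictly antitone on [0, ∞)
  set Gf : ℝ → ℝ := fun I =>
      K * (γ - η * (ζ * I / (η + ζ * I)) - Real.sqrt β * Real.sqrt (η + ζ * I))
        - ν * (ξ + ζ * (ζ * I / (η + ζ * I) - 1) ^ 2 + ζ * Real.sqrt (β / (η + ζ * I)))⁻¹
        - (1 + ξ * K) * I with hGf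
  have hanti : StrictAntiOn Gf (Set.Ici 0) := by
    intro a ha b hb hab
    simp only [Set.mem_Ici] at ha hb
    have h1 := hφmono a b ha hab.le
    have h2 : Real.sqrt (η + ζ * a) ≤ Real.sqrt (η + ζ * b) := by
      apply Real.sqrt_le_sqrt; nlinarith
    have h3 := hFmono a b ha hab.le
    have h4 : K * (η * (ζ * a / (η + ζ * a))) ≤ K * (η * (ζ * b / (η + ζ * b))) := by
      apply mul_le_mul_of_nonneg_left _ hK.le
      exact mul_le_mul_of_nonneg_left h1 hη.le
    have h5 : K * (Real.sqrt β * Real.sqrt (η + ζ * a)) ≤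
        K * (Real.sqrt β * Real.sqrt (η + ζ * b)) := by
      apply mul_le_mul_of_nonneg_left _ hK.le
      exact mul_le_mul_of_nonneg_left h2 (Real.sqrt_nonneg β)
    have h6 : (1 + ξ * K) * a < (1 + ξ * K) * b := by
      apply mul_lt_mul_of_pos_left hab
      positivity
    simp only [hGf]
    nlinarith
  -- G 0 > 0
  have hG0 : 0 < Gf 0 := by
    have e1 : ζ * (0:ℝ) / (η + ζ * 0) = 0 := by
      rw [mul_zero, zero_div]
    have e2 : Real.sqrt β * Real.sqrt (η + ζ * 0) = Real.sqrt (η * β) := by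
      rw [mul_zero, add_zero, Real.sqrt_mul hη.le, mul_comm]
    have e3 : η + ζ * (0:ℝ) = η := by ring
    have e2' : Real.sqrt β * Real.sqrt η = Real.sqrt (η * β) := by
      rw [Real.sqrt_mul hη.le, mul_comm]
    have hGf0 : Gf 0 = K * (γ - Real.sqrt (η * β))
        - ν * (ξ + ζ + ζ * Real.sqrt (β / η))⁻¹ := by
      simp only [hGf, e1, e3, e2']
      ring
    rw [hGf0]
    set S : ℝ := ξ + ζ + ζ * Real.sqrt (β / η) with hS
    have hSpos : 0 < S := by positivity
    have hKt : ν < K * (γ - Real.sqrt (η * β)) * S := by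
      have h := hR0
      rw [div_mul_eq_mul_div, div_mul_eq_mul_div, lt_div_iff₀ hν] at h
      linarith
    have : ν * S⁻¹ < K * (γ - Real.sqrt (η * β)) := by
      rw [← div_eq_mul_inv, div_lt_iff₀ hSpos]
      linarith
    linarith
  -- G M < 0 for M large
  set M : ℝ := K * γ / (1 + ξ * K) + 1 with hM
  have hMpos : 0 < M := by positivity
  have hGM : Gf M < 0 := by
    have hφ := hφnn M hMpos.le
    have hs : 0 ≤ Real.sqrt β * Real.sqrt (η + ζ * M) := by positivity
    have hFM : 0 < ν * (ξ + ζ * (ζ * M / (η + ζ * M) - 1) ^ 2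
        + ζ * Real.sqrt (β / (η + ζ * M)))⁻¹ := by
      exact mul_pos hν (inv_pos.mpr (hFpos M hMpos.le))
    have hne : (1 + ξ * K) ≠ 0 := by positivity
    have hMe : (1 + ξ * K) * M = K * γ + (1 + ξ * K) := by
      rw [hM]; field_simp
    simp only [hGf]
    rw [hMe]
    nlinarith [mul_le_mul_of_nonneg_left hφ (mul_pos hK hη).le]
  -- continuity
  have hpne : ∀ x ∈ Set.Icc (0:ℝ) M, η + ζ * x ≠ 0 := fun x hx => (hp x hx.1).ne'
  have hcp : ContinuousOn (fun I : ℝ => η + ζ * I) (Set.Icc 0 M) :=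
    (continuous_const.add (continuous_const.mul continuous_id)).continuousOn
  have hcφ : ContinuousOn (fun I : ℝ => ζ * I / (η + ζ * I)) (Set.Icc 0 M) :=
    ContinuousOn.div (continuous_const.mul continuous_id).continuousOn hcp hpne
  have hcs : ContinuousOn (fun I : ℝ => Real.sqrt (η + ζ * I)) (Set.Icc 0 M) :=
    Real.continuous_sqrt.comp_continuousOn hcp
  have hcbs : ContinuousOn (fun I : ℝ => Real.sqrt (β / (η + ζ * I))) (Set.Icc 0 M) :=
    Real.continuous_sqrt.comp_continuousOn (ContinuousOn.div continuousOn_const hcp hpne)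
  have hcD : ContinuousOn (fun I : ℝ =>
      ξ + ζ * (ζ * I / (η + ζ * I) - 1) ^ 2 + ζ * Real.sqrt (β / (η + ζ * I)))
      (Set.Icc 0 M) := by
    apply ContinuousOn.add
    · apply ContinuousOn.add continuousOn_const
      exact continuousOn_const.mul ((hcφ.sub continuousOn_const).pow 2)
    · exact continuousOn_const.mul hcbs
  have hcG : ContinuousOn Gf (Set.Icc 0 M) := by
    apply ContinuousOn.sub
    apply ContinuousOn.sub
    · exact continuousOn_const.mul
        (((continuousOn_const.sub (continuousOn_const.mul hcφ)).sub
          (continuousOn_const.mul hcs)))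
    · exact continuousOn_const.mul
        (hcD.inv₀ (fun x hx => (hFpos x hx.1).ne'))
    · exact (continuous_const.mul continuous_id).continuousOn
  -- existence via IVT
  have hIVT := intermediate_value_Ioo' hMpos.le hcG
  have h0mem : (0:ℝ) ∈ Set.Ioo (Gf M) (Gf 0) := ⟨hGM, hG0⟩
  obtain ⟨I, hImem, hGI⟩ := hIVT h0mem
  refine ⟨I, ⟨hImem.1, hGI⟩, ?_⟩
  rintro J ⟨hJpos, hGJ⟩
  exact hanti.injOn (Set.mem_Ici.mpr hJpos.le) (Set.mem_Ici.mpr hImem.1.le)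
    (by rw [hGJ, hGI])
end

section
/- Let γ, η, ζ, β, ξ, K > 0 with γ > (ηβ)^{1/2}, and let Ī > 0. Set h = η + ζĪ, φ = ζĪ/(η+ζĪ), σ̄² = (β/h)^{1/2}, and S̄ = K(γ − (1/K + ηζ/(η+ζĪ) + ξ)Ī − (βh)^{1/2}). Assume S̄ > 0. Then the Gaussian s̄(x) = S̄(2πσ̄²)^{−1/2} exp(−(x−φ)²/(2σ̄²)) satisfies β s̄''(x) + (γ − ηx² − (ξ + ζ(1−x)² + 1/K)Ī − S̄/K) s̄(x) = 0 for all x ∈ ℝ. -/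
/-!
Up to its normalising constant, `s̄` is `exp (-(x - φ)² / (2σ̄²))`, whose second derivative is
`((x - φ)² / σ̄⁴ - 1 / σ̄²) s̄`. Completing the square in the infection terms writes the
coefficient of `s̄` as `√(βh) - h (x - φ)²`, and `σ̄² = √(β / h)` is exactly the variance for
which `β / σ̄⁴ = h` and `β / σ̄² = √(βh)`, so the two contributions cancel.
-/

open Real

section Gaussian

variable (A φ v : ℝ)

theorem hasDerivAt_gaussian (x : ℝ) :
    HasDerivAt (fun y => A * exp (-(y - φ) ^ 2 / (2 * v)))
      (A * exp (-(x - φ) ^ 2 / (2 * v)) * (-(x - φ) / v)) x := by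
  have hexponent : HasDerivAt (fun y => -(y - φ) ^ 2 / (2 * v)) (-(x - φ) / v) x := by
    refine ((((hasDerivAt_id x).sub_const φ).fun_pow 2).neg).div_const (2 * v) |>.congr_deriv ?_
    simp only [id]
    ring
  simpa only [mul_assoc] using hexponent.exp.const_mul A

theorem deriv_gaussian :
    deriv (fun y => A * exp (-(y - φ) ^ 2 / (2 * v)))
      = fun x => A * exp (-(x - φ) ^ 2 / (2 * v)) * (-(x - φ) / v) :=
  funext fun x => (hasDerivAt_gaussian A φ v x).deriv

theorem deriv_deriv_gaussian (x : ℝ) :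
    deriv (deriv fun y => A * exp (-(y - φ) ^ 2 / (2 * v))) x
      = ((x - φ) ^ 2 / v ^ 2 - 1 / v) * (A * exp (-(x - φ) ^ 2 / (2 * v))) := by
  rw [deriv_gaussian]
  have hlinear : HasDerivAt (fun y => -(y - φ) / v) (-1 / v) x :=
    (((hasDerivAt_id x).sub_const φ).neg).div_const v
  exact ((hasDerivAt_gaussian A φ v x).mul hlinear).deriv.trans (by ring)

end Gaussian

theorem rates_complete_square {F : Type*} [Field F] (γ η ζ ξ I x : F) (hh : η + ζ * I ≠ 0) :
    γ - η * x ^ 2 - (ξ + ζ * (1 - x) ^ 2) * I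
      = γ - (η * ζ / (η + ζ * I) + ξ) * I
        - (η + ζ * I) * (x - ζ * I / (η + ζ * I)) ^ 2 := by
  field_simp
  ring

theorem mul_sq_div_sq_sub_one_div_of_eq_sqrt {β h v : ℝ} (hβ : 0 < β) (hh : 0 < h) (hv : v = √(β / h))
    (y : ℝ) : β * (y ^ 2 / v ^ 2 - 1 / v) = h * y ^ 2 - √(β * h) := by
  have hv_pos : 0 < v := hv ▸ sqrt_pos.2 (div_pos hβ hh)
  have hquadratic : β / v ^ 2 = h := by
    rw [hv, sq_sqrt (div_pos hβ hh).le]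
    field_simp
  have hconstant : β / v = √(β * h) := by
    rw [div_eq_iff hv_pos.ne', hv, ← sqrt_mul (by positivity),
      show β * h * (β / h) = β ^ 2 by field_simp, sqrt_sq hβ.le]
  rw [show β * (y ^ 2 / v ^ 2 - 1 / v) = β / v ^ 2 * y ^ 2 - β / v by ring,
    hquadratic, hconstant]

theorem stmt_13_general (γ η ζ β ξ K Ibar : ℝ) (hη : 0 < η) (hζ : 0 < ζ)
    (hβ : 0 < β) (hK : 0 < K) (hI : 0 < Ibar)
    (h φ σ2 S : ℝ)
    (hh : h = η + ζ * Ibar) (hφ : φ = ζ * Ibar / (η + ζ * Ibar))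
    (hσ2 : σ2 = Real.sqrt (β / h))
    (hS : S = K * (γ - (1 / K + η * ζ / (η + ζ * Ibar) + ξ) * Ibar - Real.sqrt (β * h)))
    (s : ℝ → ℝ)
    (hs : s = fun x => S * (2 * π * σ2) ^ (-(1 : ℝ) / 2) * Real.exp (-(x - φ) ^ 2 / (2 * σ2))) :
    ∀ x : ℝ,
      β * deriv (deriv s) x
        + (γ - η * x ^ 2 - (ξ + ζ * (1 - x) ^ 2 + 1 / K) * Ibar - S / K) * s x = 0 := by
  intro x
  have hh_pos : 0 < h := hh ▸ by positivity
  have hcoeff : γ - η * x ^ 2 - (ξ + ζ * (1 - x) ^ 2 + 1 / K) * Ibar - S / K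
      = √(β * h) - h * (x - φ) ^ 2 := by
    have hsquare := rates_complete_square γ η ζ ξ Ibar x (hh ▸ hh_pos.ne')
    rw [← hφ, ← hh] at hsquare
    have hSK : S / K = γ - (1 / K + η * ζ / h + ξ) * Ibar - √(β * h) := by
      rw [hS, ← hh]
      field_simp
    rw [hSK]
    linear_combination hsquare
  rw [hs, deriv_deriv_gaussian, hcoeff, ← mul_assoc,
    mul_sq_div_sq_sub_one_div_of_eq_sqrt hβ hh_pos hσ2]
  ring

theorem stmt_13 (γ η ζ β ξ K Ibar : ℝ) (hγ : 0 < γ) (hη : 0 < η) (hζ : 0 < ζ)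
    (hβ : 0 < β) (hξ : 0 < ξ) (hK : 0 < K)
    (hcond : Real.sqrt (η * β) < γ) (hI : 0 < Ibar)
    (h φ σ2 S : ℝ)
    (hh : h = η + ζ * Ibar) (hφ : φ = ζ * Ibar / (η + ζ * Ibar))
    (hσ2 : σ2 = Real.sqrt (β / h))
    (hS : S = K * (γ - (1 / K + η * ζ / (η + ζ * Ibar) + ξ) * Ibar - Real.sqrt (β * h)))
    (hSpos : 0 < S)
    (s : ℝ → ℝ)
    (hs : s = fun x => S * (2 * π * σ2) ^ (-(1 : ℝ) / 2) * Real.exp (-(x - φ) ^ 2 / (2 * σ2))) :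
    ∀ x : ℝ,
      β * deriv (deriv s) x
        + (γ - η * x ^ 2 - (ξ + ζ * (1 - x) ^ 2 + 1 / K) * Ibar - S / K) * s x = 0 :=
  stmt_13_general γ η ζ β ξ K Ibar hη hζ hβ hK hI h φ σ2 S hh hφ hσ2 hS s hs
end
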